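/- arXiv:2401.04856 — 2 statements merged into one kernel-verified Lean document; each statement's English description precedes it below -/
import Mathlib

section
/- Let $\{y_i\}_{i=1}^N$ be vectors in $\mathbb{R}^d$ and let $w_i = \exp(-\|y_i\|^2)/\sum_{j=1}^N \exp(-\|y_j\|^2)$. Then $\left\|\sum_{i=1}^N w_i y_i\right\|^2 \leq \frac{1}{N}\sum_{i=1}^N \|y_i\|^2$. -/
open Real Finset

/-! Jensen's inequality for the convex function `‖·‖²` bounds the left-hand side by the
softmax-weighted mean of `‖yᵢ‖²`. The softmax weights `exp (-‖yᵢ‖²)` decrease as `‖yᵢ‖²`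
increases, so by Chebyshev's sum inequality this weighted mean is at most the plain mean. -/

theorem convexOn_univ_norm_sq {E : Type*} [SeminormedAddCommGroup E] [NormedSpace ℝ E] :
    ConvexOn ℝ Set.univ fun x : E => ‖x‖ ^ 2 :=
  (convexOn_univ_norm.pow fun x _ => norm_nonneg x) 2

theorem norm_sum_smul_sq_le_sum_mul_norm_sq {ι E : Type*} [SeminormedAddCommGroup E]
    [NormedSpace ℝ E] (s : Finset ι) {w : ι → ℝ} (y : ι → E) (hw₀ : ∀ i ∈ s, 0 ≤ w i)
    (hw₁ : ∑ i ∈ s, w i = 1) :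
    ‖∑ i ∈ s, w i • y i‖ ^ 2 ≤ ∑ i ∈ s, w i * ‖y i‖ ^ 2 :=
  convexOn_univ_norm_sq.map_sum_le hw₀ hw₁ fun i _ => Set.mem_univ (y i)

theorem Antivary.sum_mul_le_one_div_card_mul_sum {ι : Type*} [Fintype ι] {w a : ι → ℝ}
    (h : Antivary w a) (hw : ∑ i, w i = 1) :
    ∑ i, w i * a i ≤ (1 / Fintype.card ι) * ∑ i, a i := by
  have hι : Nonempty ι := by
    by_contra hι
    simp [not_nonempty_iff.1 hι] at hw
  have hcard : (0 : ℝ) < Fintype.card ι := by exact_mod_cast Fintype.card_pos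
  rw [one_div_mul_eq_div, le_div_iff₀ hcard, mul_comm]
  simpa [hw] using h.card_mul_sum_le_sum_mul_sum

section Softmax

variable {ι : Type*} [Fintype ι]

noncomputable def softmax (x : ι → ℝ) (i : ι) : ℝ :=
  exp (x i) / ∑ j, exp (x j)

theorem softmax_nonneg (x : ι → ℝ) (i : ι) : 0 ≤ softmax x i := by
  unfold softmax
  positivity

theorem sum_softmax [Nonempty ι] (x : ι → ℝ) : ∑ i, softmax x i = 1 := by
  have hZ : 0 < ∑ j, exp (x j) := sum_pos (fun j _ => exp_pos (x j)) univ_nonempty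
  simp only [softmax, ← sum_div, div_self hZ.ne']

theorem monovary_softmax (x : ι → ℝ) : Monovary (softmax x) x := fun _ _ hij =>
  div_le_div_of_nonneg_right (exp_le_exp.2 hij.le) (sum_nonneg fun k _ => (exp_pos (x k)).le)

theorem antivary_softmax_neg (a : ι → ℝ) : Antivary (softmax (-a)) a :=
  monovary_neg_right.1 (monovary_softmax (-a))

end Softmax

theorem softmax_weighted_avg_sq_norm_le
    (N d : ℕ) (y : Fin N → EuclideanSpace ℝ (Fin d))
    (w : Fin N → ℝ)
    (hw : ∀ i, w i = Real.exp (-‖y i‖ ^ 2) / ∑ j, Real.exp (-‖y j‖ ^ 2)) :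
    ‖∑ i, w i • y i‖ ^ 2 ≤ (1 / (N : ℝ)) * ∑ i, ‖y i‖ ^ 2 := by
  rcases isEmpty_or_nonempty (Fin N) with _ | _
  · simp
  set a : Fin N → ℝ := fun i => ‖y i‖ ^ 2
  obtain rfl : w = softmax (-a) := funext hw
  calc ‖∑ i, softmax (-a) i • y i‖ ^ 2 ≤ ∑ i, softmax (-a) i * a i :=
        norm_sum_smul_sq_le_sum_mul_norm_sq _ y (fun i _ => softmax_nonneg _ i) (sum_softmax _)
    _ ≤ (1 / (N : ℝ)) * ∑ i, a i := by
        simpa using (antivary_softmax_neg a).sum_mul_le_one_div_card_mul_sum (sum_softmax _)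
end

section
/- Let $\{y_i\}_{i=1}^N \subset \mathbb{R}^d$ satisfy $\|y_i\| \leq d$ for all $i$. Let ${\mathsf{q}}_{T-\delta}(x) = \frac{1}{N}\sum_{i=1}^N \mathcal{N}(x; \mu(\delta)y_i, \sigma(\delta)^2 I)$ and $\mathsf{p}_*^\gamma(x) = \frac{1}{N}\sum_{i=1}^N \mathcal{N}(x; y_i, \sigma(\delta)^2 I)$, where $\mu(\delta) = e^{-\delta}$ and $\sigma(\delta)^2 = 1 - e^{-2\delta}$. Then $\mathrm{TV}({\mathsf{q}}_{T-\delta}, \mathsf{p}_*^\gamma) \leq \frac{d\sqrt{\delta}}{2}$ for any $\delta > 0$. -/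
/-!
The Gaussians `N(μ y, σ² I)` and `N(y, σ² I)` differ by the translation `(1 - μ) y`, and the
total variation between two isotropic Gaussians of equal covariance is at most
`‖a - b‖ / (2σ)`: after a translation and a rotation the two means differ along one
coordinate axis only, the density factorises over coordinates, and in dimension one the
difference `φ(t) - φ(t - c)` changes sign at `c / 2`, so its `L¹` norm is twice the mass of `φ`
on an interval of length `c`, at most `2 c φ(0) ≤ c / σ`. Averaging over the mixture components
and the bound `(1 - e^{-δ}) / √(1 - e^{-2δ}) ≤ √δ` give the claim.
-/

open Real MeasureTheory Finset

/-- Density of the isotropic Gaussian `N(m, s2 I)` on `ℝ^d`. -/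
noncomputable def gaussDensity (d : ℕ) (m : EuclideanSpace ℝ (Fin d)) (s2 : ℝ)
    (x : EuclideanSpace ℝ (Fin d)) : ℝ :=
  (2 * Real.pi * s2) ^ (-(d : ℝ) / 2) * Real.exp (-‖x - m‖ ^ 2 / (2 * s2))

open ProbabilityTheory Set
open scoped NNReal

lemma integral_abs_eq_two_mul_setIntegral_Iic {f : ℝ → ℝ} (hf : Integrable f)
    (hf0 : ∫ t, f t = 0) {a : ℝ} (hpos : ∀ t ≤ a, 0 ≤ f t) (hneg : ∀ t, a < t → f t ≤ 0) :
    ∫ t, |f t| = 2 * ∫ t in Iic a, f t := by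
  have hsplit : ∀ t, |f t| = 2 * (Iic a).indicator f t - f t := by
    intro t
    by_cases ht : t ≤ a
    · rw [Set.indicator_of_mem (show t ∈ Iic a from ht), abs_of_nonneg (hpos t ht)]; ring
    · rw [Set.indicator_of_notMem (show t ∉ Iic a from ht),
        abs_of_nonpos (hneg t (not_le.1 ht))]; ring
  simp_rw [hsplit]
  rw [integral_sub ((hf.indicator measurableSet_Iic).const_mul 2) hf, hf0, integral_const_mul,
    integral_indicator measurableSet_Iic, sub_zero]

lemma setIntegral_Iic_comp_sub_right {p : ℝ → ℝ} (a c : ℝ) :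
    ∫ t in Iic a, p (t - c) = ∫ t in Iic (a - c), p t := by
  have := (measurePreserving_sub_right volume c).setIntegral_preimage_emb
    (measurableEmbedding_subRight c) p (Iic (a - c))
  rwa [show (· - c) ⁻¹' Iic (a - c) = Iic a by ext; simp] at this

lemma integral_abs_sub_comp_sub_le {p : ℝ → ℝ} (hp : Integrable p)
    (hp_anti : ∀ a b, b ^ 2 ≤ a ^ 2 → p a ≤ p b) {c : ℝ} (hc : 0 ≤ c) :
    ∫ t, |p t - p (t - c)| ≤ 2 * c * p 0 := by
  have hpc : Integrable fun t ↦ p (t - c) := hp.comp_sub_right c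
  have hmass : ∫ t, (p t - p (t - c)) = 0 := by
    rw [integral_sub hp hpc, integral_sub_right_eq_self p c, sub_self]
  rw [integral_abs_eq_two_mul_setIntegral_Iic (f := fun t ↦ p t - p (t - c)) (a := c / 2)
      (hp.sub hpc) hmass (fun t ht ↦ sub_nonneg.2 (hp_anti _ _ (by nlinarith)))
      (fun t ht ↦ sub_nonpos.2 (hp_anti _ _ (by nlinarith))),
    integral_sub hp.integrableOn hpc.integrableOn, setIntegral_Iic_comp_sub_right,
    intervalIntegral.integral_Iic_sub_Iic hp.integrableOn hp.integrableOn]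
  have hbound : ∫ t in c / 2 - c..c / 2, p t ≤ ∫ t in c / 2 - c..c / 2, p 0 :=
    intervalIntegral.integral_mono_on (by linarith) hp.intervalIntegrable
      intervalIntegrable_const fun t _ ↦ hp_anti _ _ (by simpa using sq_nonneg t)
  rw [intervalIntegral.integral_const, smul_eq_mul] at hbound
  linarith

lemma gaussianPDFReal_zero_le_of_sq_le {v : ℝ≥0} {a b : ℝ} (h : b ^ 2 ≤ a ^ 2) :
    gaussianPDFReal 0 v a ≤ gaussianPDFReal 0 v b := by
  simp only [gaussianPDFReal, sub_zero]
  gcongr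

lemma integral_abs_gaussianPDFReal_sub_le (v : ℝ≥0) {c : ℝ} (hc : 0 ≤ c) :
    ∫ t, |gaussianPDFReal c v t - gaussianPDFReal 0 v t| ≤ c / √v := by
  have hshift : ∀ t, gaussianPDFReal c v t = gaussianPDFReal 0 v (t - c) := fun t ↦ by
    rw [gaussianPDFReal_sub, zero_add]
  simp_rw [hshift, abs_sub_comm (gaussianPDFReal 0 v (_ - c))]
  refine (integral_abs_sub_comp_sub_le (integrable_gaussianPDFReal 0 v)
    (fun _ _ ↦ gaussianPDFReal_zero_le_of_sq_le) hc).trans ?_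
  have h2pi : 2 / √(2 * π) ≤ 1 :=
    (div_le_one (by positivity)).2 (Real.le_sqrt_of_sq_le (by nlinarith [Real.pi_gt_three]))
  rw [gaussianPDFReal, sub_zero, zero_pow two_ne_zero, neg_zero, zero_div, exp_zero, mul_one,
    sqrt_mul (by positivity)]
  calc 2 * c * (√(2 * π) * √v)⁻¹ = 2 / √(2 * π) * (c / √v) := by ring
    _ ≤ c / √v := mul_le_of_le_one_left (by positivity) h2pi

section GaussDensity

variable {d : ℕ}

lemma gaussDensity_eq_prod {v : ℝ≥0} (hv : v ≠ 0) (m x : EuclideanSpace ℝ (Fin d)) :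
    gaussDensity d m v x = ∏ j, gaussianPDFReal (m j) v (x j) := by
  have hv' : (0 : ℝ) ≤ 2 * π * v := by positivity
  simp only [gaussDensity, gaussianPDFReal, prod_mul_distrib, prod_const, card_univ,
    Fintype.card_fin, ← exp_sum, EuclideanSpace.real_norm_sq_eq, PiLp.sub_apply, ← sum_div,
    ← sum_neg_distrib, Real.sqrt_eq_rpow, ← rpow_neg hv', ← rpow_mul_natCast hv']
  ring_nf

lemma integrable_gaussDensity {v : ℝ≥0} (hv : v ≠ 0) (m : EuclideanSpace ℝ (Fin d)) :
    Integrable (gaussDensity d m v) := by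
  rw [← (PiLp.volume_preserving_toLp (Fin d)).integrable_comp_emb
    (MeasurableEquiv.toLp 2 _).measurableEmbedding]
  simp only [Function.comp_def, gaussDensity_eq_prod hv]
  exact Integrable.fintype_prod fun j ↦ integrable_gaussianPDFReal (m j) v

lemma integral_abs_gaussDensity_sub_eq_sub_zero (a b : EuclideanSpace ℝ (Fin d)) (s2 : ℝ) :
    ∫ x, |gaussDensity d a s2 x - gaussDensity d b s2 x| =
      ∫ x, |gaussDensity d (a - b) s2 x - gaussDensity d 0 s2 x| := by
  conv_rhs => rw [← integral_sub_right_eq_self _ b]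
  simp only [gaussDensity, sub_sub_sub_cancel_right, sub_zero]

lemma integral_abs_gaussDensity_map_sub_zero
    (e : EuclideanSpace ℝ (Fin d) ≃ₗᵢ[ℝ] EuclideanSpace ℝ (Fin d))
    (u : EuclideanSpace ℝ (Fin d)) (s2 : ℝ) :
    ∫ x, |gaussDensity d (e u) s2 x - gaussDensity d 0 s2 x| =
      ∫ x, |gaussDensity d u s2 x - gaussDensity d 0 s2 x| := by
  rw [← e.measurePreserving.integral_comp e.toHomeomorph.measurableEmbedding]
  simp only [gaussDensity, sub_zero, ← map_sub, LinearIsometryEquiv.norm_map]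

lemma integral_abs_gaussDensity_single_sub_zero {n : ℕ} {v : ℝ≥0} (hv : v ≠ 0) (c : ℝ) :
    ∫ x, |gaussDensity (n + 1) (EuclideanSpace.single 0 c) v x - gaussDensity (n + 1) 0 v x| =
      ∫ t, |gaussianPDFReal c v t - gaussianPDFReal 0 v t| := by
  rw [← (PiLp.volume_preserving_toLp (Fin (n + 1))).integral_comp
    (MeasurableEquiv.toLp 2 _).measurableEmbedding]
  have hfactor : ∀ x : Fin (n + 1) → ℝ,
      |gaussDensity (n + 1) (EuclideanSpace.single 0 c) v (WithLp.toLp 2 x) -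
        gaussDensity (n + 1) 0 v (WithLp.toLp 2 x)| =
      ∏ j, (Fin.cons (fun t ↦ |gaussianPDFReal c v t - gaussianPDFReal 0 v t|)
        (fun _ ↦ gaussianPDFReal 0 v) : Fin (n + 1) → ℝ → ℝ) j (x j) := by
    intro x
    simp [gaussDensity_eq_prod hv, Fin.prod_univ_succ, Fin.succ_ne_zero, ← sub_mul, abs_mul,
      abs_of_nonneg (prod_nonneg fun _ _ ↦ gaussianPDFReal_nonneg _ _ _)]
  simp_rw [hfactor]
  rw [integral_fintype_prod_volume_eq_prod, Fin.prod_univ_succ]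
  simp only [Fin.cons_zero, Fin.cons_succ, integral_gaussianPDFReal_eq_one 0 hv, prod_const_one,
    mul_one]

lemma integral_abs_gaussDensity_sub_le {v : ℝ≥0} (hv : v ≠ 0) (a b : EuclideanSpace ℝ (Fin d)) :
    ∫ x, |gaussDensity d a v x - gaussDensity d b v x| ≤ ‖a - b‖ / √v := by
  rw [integral_abs_gaussDensity_sub_eq_sub_zero]
  cases d with
  | zero => obtain rfl := Subsingleton.elim a b; simp
  | succ n =>
    have hnorm : ‖EuclideanSpace.single (0 : Fin (n + 1)) ‖a - b‖‖ = ‖a - b‖ := by simp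
    conv_lhs => rw [← Submodule.reflection_sub hnorm, integral_abs_gaussDensity_map_sub_zero,
      integral_abs_gaussDensity_single_sub_zero hv]
    exact integral_abs_gaussianPDFReal_sub_le v (norm_nonneg (a - b))

end GaussDensity

lemma integral_abs_average_sub_average_le {α : Type*} [MeasurableSpace α] {μ : Measure α}
    {N : ℕ} {p q : Fin N → α → ℝ} (hp : ∀ i, Integrable (p i) μ) (hq : ∀ i, Integrable (q i) μ)
    {B : ℝ} (hB : 0 ≤ B) (hpq : ∀ i, ∫ x, |p i x - q i x| ∂μ ≤ B) :
    ∫ x, |(1 / (N : ℝ)) * (∑ i, p i x) - (1 / (N : ℝ)) * (∑ i, q i x)| ∂μ ≤ B := by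
  have hint : ∀ i ∈ Finset.univ, Integrable (fun x ↦ |p i x - q i x|) μ :=
    fun i _ ↦ ((hp i).sub (hq i)).abs
  calc ∫ x, |(1 / (N : ℝ)) * (∑ i, p i x) - (1 / (N : ℝ)) * (∑ i, q i x)| ∂μ
      ≤ ∫ x, (1 / (N : ℝ)) * ∑ i, |p i x - q i x| ∂μ := by
        refine integral_mono_of_nonneg (ae_of_all _ fun _ ↦ abs_nonneg _)
          ((integrable_finsetSum _ hint).const_mul _) (ae_of_all _ fun x ↦ ?_)
        dsimp only
        rw [← mul_sub, ← sum_sub_distrib, abs_mul, abs_of_nonneg (by positivity)]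
        gcongr
        exact abs_sum_le_sum_abs _ _
    _ = (1 / (N : ℝ)) * ∑ i, ∫ x, |p i x - q i x| ∂μ := by
        rw [integral_const_mul, integral_finsetSum _ hint]
    _ ≤ (1 / (N : ℝ)) * ∑ _i : Fin N, B := by gcongr with i; exact hpq i
    _ ≤ B := by
        rcases N.eq_zero_or_pos with rfl | hN
        · simpa using hB
        · rw [sum_const, card_univ, Fintype.card_fin, nsmul_eq_mul, one_div,
            inv_mul_cancel_left₀ (by positivity)]

lemma one_sub_exp_neg_le_sqrt_mul_sqrt {δ : ℝ} (hδ : 0 ≤ δ) :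
    1 - exp (-δ) ≤ √δ * √(1 - exp (-2 * δ)) := by
  have hexp : exp (-2 * δ) = exp (-δ) ^ 2 := by rw [← exp_nat_mul]; ring_nf
  have hlin : 1 - exp (-δ) ≤ δ := by linarith [add_one_le_exp (-δ)]
  have hle1 : exp (-δ) ≤ 1 := exp_le_one_iff.2 (by linarith)
  rw [← sqrt_mul hδ, hexp]
  apply le_sqrt_of_sq_le
  nlinarith [mul_nonneg (mul_nonneg (sub_nonneg.2 hle1) hδ) (exp_pos (-δ)).le]

theorem tv_backward_vs_kde
    (d N : ℕ) (y : Fin N → EuclideanSpace ℝ (Fin d))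
    (hy : ∀ i, ‖y i‖ ≤ (d : ℝ))
    (δ : ℝ) (hδ : 0 < δ)
    (μδ σδ2 : ℝ) (hμδ : μδ = Real.exp (-δ)) (hσδ2 : σδ2 = 1 - Real.exp (-2 * δ)) :
    (1 / 2) * ∫ x, |(1 / (N : ℝ)) * (∑ i, gaussDensity d (μδ • y i) σδ2 x) -
        (1 / (N : ℝ)) * (∑ i, gaussDensity d (y i) σδ2 x)| ≤
      (d : ℝ) * Real.sqrt δ / 2 := by
  have hσ : 0 < σδ2 := by rw [hσδ2, sub_pos, exp_lt_one_iff]; linarith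
  lift σδ2 to ℝ≥0 using hσ.le
  have hv : σδ2 ≠ 0 := by exact_mod_cast hσ.ne'
  have hμ : 0 ≤ 1 - μδ := by rw [hμδ, sub_nonneg, exp_le_one_iff]; linarith
  have hcomponent : ∀ i, ∫ x, |gaussDensity d (μδ • y i) σδ2 x - gaussDensity d (y i) σδ2 x| ≤
      d * √δ := fun i ↦ calc
    _ ≤ ‖μδ • y i - y i‖ / √σδ2 := integral_abs_gaussDensity_sub_le hv _ _
    _ ≤ d * ((1 - μδ) / √σδ2) := by
        rw [← mul_div_assoc, show μδ • y i - y i = (μδ - 1) • y i by rw [sub_smul, one_smul],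
          norm_smul, norm_eq_abs, abs_sub_comm, abs_of_nonneg hμ, mul_comm]
        gcongr
        exact hy i
    _ ≤ d * √δ := by
        gcongr
        rw [div_le_iff₀ (Real.sqrt_pos.2 hσ), hμδ, hσδ2]
        exact one_sub_exp_neg_le_sqrt_mul_sqrt hδ.le
  have hmix := integral_abs_average_sub_average_le (fun i ↦ integrable_gaussDensity hv _)
    (fun i ↦ integrable_gaussDensity hv _) (by positivity) hcomponent
  linarith
end
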